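/- arXiv:2307.09836 — 5 statements merged into one kernel-verified Lean document; each statement's English description precedes it below -/
import Mathlib

section
/- The projection of a matrix Y onto the ℓ_{1,∞} ball satisfies the sign decomposition: P_{B^C_{1,∞}}(Y) = sign(Y) ⊙ P_{Δ^C_{1,∞}}(|Y|), where Δ^C_{1,∞} is the intersection of the ball with the nonnegative orthant, ⊙ is elementwise product, and |Y| and sign(Y) are taken elementwise. -/
noncomputable def l1inf {n m : ℕ} (X : Matrix (Fin n) (Fin m) ℝ) : ℝ :=
  ∑ j, ⨆ i, |X i j|

def l1infBall (n m : ℕ) (C : ℝ) : Set (Matrix (Fin n) (Fin m) ℝ) :=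
  {X | l1inf X ≤ C}

/-- The solid ℓ_{1,∞} simplex: the ball intersected with the nonnegative orthant. -/
def l1infSimplex (n m : ℕ) (C : ℝ) : Set (Matrix (Fin n) (Fin m) ℝ) :=
  {X | l1inf X ≤ C ∧ ∀ i j, 0 ≤ X i j}

def IsProjM {n m : ℕ} (S : Set (Matrix (Fin n) (Fin m) ℝ))
    (Y X : Matrix (Fin n) (Fin m) ℝ) : Prop :=
  X ∈ S ∧ ∀ Z ∈ S, ∑ i, ∑ j, (X i j - Y i j) ^ 2 ≤ ∑ i, ∑ j, (Z i j - Y i j) ^ 2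

lemma sign_mul_abs' (y : ℝ) : Real.sign y * |y| = y := by
  rcases lt_trichotomy y 0 with h | h | h
  · rw [Real.sign_of_neg h, abs_of_neg h]; ring
  · simp [h]
  · rw [Real.sign_of_pos h, abs_of_pos h]; ring

lemma sign_sq_le_one (y : ℝ) : (Real.sign y) ^ 2 ≤ 1 := by
  rcases Real.sign_apply_eq y with h | h | h <;> rw [h] <;> norm_num

/-- Sign decomposition: `P_{B^C_{1,∞}}(Y) = sign(Y) ⊙ P_{Δ^C_{1,∞}}(|Y|)`. -/
theorem stmt3 {n m : ℕ} (C : ℝ) (hC : 0 ≤ C) (Y : Matrix (Fin n) (Fin m) ℝ)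
    (X : Matrix (Fin n) (Fin m) ℝ)
    (hX : IsProjM (l1infSimplex n m C) (fun i j => |Y i j|) X) :
    IsProjM (l1infBall n m C) Y (fun i j => Real.sign (Y i j) * X i j) := by
  obtain ⟨⟨hXC, hXpos⟩, hXmin⟩ := hX
  constructor
  · -- membership
    have : l1inf (fun i j => Real.sign (Y i j) * X i j) ≤ l1inf X := by
      apply Finset.sum_le_sum
      intro j _
      rcases Nat.eq_zero_or_pos n with hn | hn
      · subst hn
        have : IsEmpty (Fin 0) := Fin.isEmpty
        simp [Real.iSup_of_isEmpty]
      · have : Nonempty (Fin n) := ⟨⟨0, hn⟩⟩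
        apply ciSup_mono (Set.Finite.bddAbove (Set.finite_range _))
        intro i
        calc |Real.sign (Y i j) * X i j| = |Real.sign (Y i j)| * |X i j| := abs_mul _ _
          _ ≤ 1 * |X i j| := by
              apply mul_le_mul_of_nonneg_right _ (abs_nonneg _)
              rcases Real.sign_apply_eq (Y i j) with h | h | h <;> rw [h] <;> norm_num
          _ = |X i j| := one_mul _
    exact le_trans this hXC
  · -- minimality
    intro Z hZ
    have hZabs : (fun i j => |Z i j|) ∈ l1infSimplex n m C := by
      constructor
      · simpa [l1inf, l1infBall, abs_abs] using hZ
      · intro i j; exact abs_nonneg _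
    have key := hXmin _ hZabs
    calc ∑ i, ∑ j, ((fun i j => Real.sign (Y i j) * X i j) i j - Y i j) ^ 2
        ≤ ∑ i, ∑ j, (X i j - |Y i j|) ^ 2 := by
          apply Finset.sum_le_sum; intro i _
          apply Finset.sum_le_sum; intro j _
          have hsy : Real.sign (Y i j) * |Y i j| = Y i j := sign_mul_abs' _
          have : Real.sign (Y i j) * X i j - Y i j
              = Real.sign (Y i j) * (X i j - |Y i j|) := by
            rw [mul_sub, hsy]
          rw [this, mul_pow]
          have h1 := sign_sq_le_one (Y i j)
          nlinarith [sq_nonneg (X i j - |Y i j|)]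
      _ ≤ ∑ i, ∑ j, (|Z i j| - |Y i j|) ^ 2 := key
      _ ≤ ∑ i, ∑ j, (Z i j - Y i j) ^ 2 := by
          apply Finset.sum_le_sum; intro i _
          apply Finset.sum_le_sum; intro j _
          have h := abs_abs_sub_abs_le_abs_sub (Z i j) (Y i j)
          calc (|Z i j| - |Y i j|) ^ 2 = |(|Z i j| - |Y i j|)| ^ 2 := (sq_abs _).symm
            _ ≤ |Z i j - Y i j| ^ 2 := pow_le_pow_left₀ (abs_nonneg _) h 2
            _ = (Z i j - Y i j) ^ 2 := sq_abs _
end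

section
/- For a nonnegative matrix Y and C ≥ 0, the projection of Y onto Δ^C_{1,∞} = {X ∈ R_+^{n×m} : ‖X‖_{1,∞} ≤ C} has nonnegative entries that satisfy X_{i,j} ≤ Y_{i,j} for all i,j (the projection never increases any entry). -/
lemma min_sq_le (a b : ℝ) : (min a b - b) ^ 2 ≤ (a - b) ^ 2 := by
  rcases le_total a b with h | h
  · rw [min_eq_left h]
  · rw [min_eq_right h]
    simpa using sq_nonneg (a - b)

lemma min_sq_lt {a b : ℝ} (h : b < a) : (min a b - b) ^ 2 < (a - b) ^ 2 := by
  rw [min_eq_right h.le]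
  have : a - b ≠ 0 := sub_ne_zero.mpr (ne_of_gt h)
  simpa using (pow_pos (sub_pos.mpr h) 2)

/-- The projection of a nonnegative matrix `Y` onto `Δ^C_{1,∞}` has nonnegative
entries and never increases any entry. -/
theorem stmt4 {n m : ℕ} (C : ℝ) (hC : 0 ≤ C) (Y : Matrix (Fin n) (Fin m) ℝ)
    (hY : ∀ i j, 0 ≤ Y i j) (X : Matrix (Fin n) (Fin m) ℝ)
    (hX : IsProjM (l1infSimplex n m C) Y X) :
    ∀ i j, 0 ≤ X i j ∧ X i j ≤ Y i j := by
  obtain ⟨⟨hl, hpos⟩, hopt⟩ := hX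
  intro i j
  refine ⟨hpos i j, ?_⟩
  by_contra h
  push_neg at h
  set Z : Matrix (Fin n) (Fin m) ℝ := fun i j => min (X i j) (Y i j) with hZ
  have hZpos : ∀ i j, 0 ≤ Z i j := fun i j => le_min (hpos i j) (hY i j)
  have hZmem : Z ∈ l1infSimplex n m C := by
    refine ⟨le_trans ?_ hl, hZpos⟩
    apply Finset.sum_le_sum
    intro j' _
    haveI : Nonempty (Fin n) := ⟨i⟩
    apply ciSup_mono
    · exact (Set.finite_range _).bddAbove
    · intro i'
      rw [abs_of_nonneg (hZpos i' j'), abs_of_nonneg (hpos i' j')]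
      exact min_le_left _ _
  have hlt : ∑ i', ∑ j', (Z i' j' - Y i' j') ^ 2 < ∑ i', ∑ j', (X i' j' - Y i' j') ^ 2 := by
    apply Finset.sum_lt_sum
    · intro i' _
      exact Finset.sum_le_sum fun j' _ => min_sq_le _ _
    · refine ⟨i, Finset.mem_univ i, ?_⟩
      apply Finset.sum_lt_sum
      · intro j' _; exact min_sq_le _ _
      · exact ⟨j, Finset.mem_univ j, min_sq_lt h⟩
  exact absurd (hopt Z hZmem) (not_le.mpr hlt)
end

section
/- For a nonnegative vector y ∈ R_+^n and θ ≥ 0 with Σ_i y_i > θ, the projection z of y onto the solid simplex Δ^θ_1 = {x ∈ R_+^n : Σ_i x_i ≤ θ} has the soft-thresholding form: there exists μ > 0 such that z_i = max(y_i − μ, 0) for all i, and Σ_i z_i = θ. -/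
/-- The solid simplex `Δ^θ_1 = {x ∈ ℝ₊^n : Σ_i x_i ≤ θ}`. -/
def solidSimplex (n : ℕ) (θ : ℝ) : Set (Fin n → ℝ) :=
  {x | (∀ i, 0 ≤ x i) ∧ ∑ i, x i ≤ θ}

/-- `z` is the Euclidean projection of `y` onto `S`. -/
def IsProjV {n : ℕ} (S : Set (Fin n → ℝ)) (y z : Fin n → ℝ) : Prop :=
  z ∈ S ∧ ∀ w ∈ S, ∑ i, (z i - y i) ^ 2 ≤ ∑ i, (w i - y i) ^ 2

/-- Soft-thresholding form of the simplex projection when `Σ y > θ`. -/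
theorem stmt7 {n : ℕ} (θ : ℝ) (hθ : 0 ≤ θ) (y : Fin n → ℝ)
    (hy : ∀ i, 0 ≤ y i) (hsum : θ < ∑ i, y i)
    (z : Fin n → ℝ) (hz : IsProjV (solidSimplex n θ) y z) :
    ∃ μ : ℝ, 0 < μ ∧ (∀ i, z i = max (y i - μ) 0) ∧ ∑ i, z i = θ := by
  obtain ⟨⟨hz0, hzsum⟩, hmin⟩ := hz
  -- Step 1: the constraint is tight: ∑ z = θ
  have hsz : ∑ i, z i = θ := by
    by_contra hne
    have hlt : ∑ i, z i < θ := lt_of_le_of_ne hzsum hne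
    have hP : 0 < ∑ i, (z i - y i) ^ 2 := by
      rcases (Finset.sum_nonneg (fun i _ => sq_nonneg (z i - y i))).lt_or_eq with h | h
      · exact h
      · exfalso
        have hall : ∀ i ∈ Finset.univ, (z i - y i) ^ 2 = 0 :=
          (Finset.sum_eq_zero_iff_of_nonneg (fun i _ => sq_nonneg _)).1 h.symm
        have : ∀ i, z i = y i := fun i => by
          have := hall i (Finset.mem_univ i)
          nlinarith [this]
        have : ∑ i, z i = ∑ i, y i := Finset.sum_congr rfl (fun i _ => this i)
        linarith
    set Sz := ∑ i, z i with hSz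
    set Sy := ∑ i, y i with hSy
    have hden : 0 < Sy - Sz := by simp only [hSz, hSy]; linarith
    set t : ℝ := (θ - Sz) / (Sy - Sz) with ht
    have ht0 : 0 < t := div_pos (by linarith) hden
    have ht1 : t < 1 := by
      rw [ht, div_lt_one hden]; linarith
    set w : Fin n → ℝ := fun k => z k + t * (y k - z k) with hw
    have hwS : w ∈ solidSimplex n θ := by
      constructor
      · intro k
        have hk1 := hz0 k
        have hk2 := hy k
        simp only [hw]
        nlinarith
      · have : ∑ k, w k = Sz + t * (Sy - Sz) := by
          simp only [hw]
          rw [Finset.sum_add_distrib, ← Finset.mul_sum, Finset.sum_sub_distrib]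
        rw [this, ht]
        rw [div_mul_cancel₀ _ (ne_of_gt hden)]
        linarith
    have hkey : ∑ i, (w i - y i) ^ 2 = (1 - t) ^ 2 * ∑ i, (z i - y i) ^ 2 := by
      rw [Finset.mul_sum]
      refine Finset.sum_congr rfl (fun k _ => ?_)
      simp only [hw]; ring
    have := hmin w hwS
    rw [hkey] at this
    nlinarith [mul_pos (mul_pos ht0 (show (0:ℝ) < 2 - t by linarith)) hP]
  -- Step 2: pairwise optimality inequalities
  have hpair : ∀ i j : Fin n, i ≠ j → 0 < z i → y j - z j ≤ y i - z i := by
    intro i j hij hzi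
    by_contra hcon
    push_neg at hcon
    set δ : ℝ := (y j - z j) - (y i - z i) with hδ
    have hδ0 : 0 < δ := by simp only [hδ]; linarith
    set ε : ℝ := min (z i) (δ / 2) with hε
    have hε0 : 0 < ε := lt_min hzi (by linarith)
    have hεzi : ε ≤ z i := min_le_left _ _
    have hεδ : ε ≤ δ / 2 := min_le_right _ _
    set w : Fin n → ℝ := fun k =>
      z k + (if k = j then ε else 0) - (if k = i then ε else 0) with hw
    have hwS : w ∈ solidSimplex n θ := by
      constructor
      · intro k
        simp only [hw]
        by_cases hki : k = i
        · subst hki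
          rw [if_neg hij, if_pos rfl]
          linarith
        · by_cases hkj : k = j
          · subst hkj
            simp [hki]
            have := hz0 k
            linarith
          · simp [hki, hkj]
            exact hz0 k
      · have : ∑ k, w k = ∑ k, z k + ε - ε := by
          simp only [hw, Finset.sum_sub_distrib, Finset.sum_add_distrib,
            Finset.sum_ite_eq', Finset.mem_univ, if_true]
        rw [this]; simp [hsz]
    have hdiff : ∑ k, (w k - y k) ^ 2 =
        ∑ k, (z k - y k) ^ 2 + (2 * ε * (z j - y j) - 2 * ε * (z i - y i) + 2 * ε ^ 2) := by
      set g : Fin n → ℝ := fun k => (w k - y k) ^ 2 - (z k - y k) ^ 2 with hg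
      have h1 : ∑ k, (w k - y k) ^ 2 = ∑ k, (z k - y k) ^ 2 + ∑ k, g k := by
        rw [← Finset.sum_add_distrib]
        refine Finset.sum_congr rfl (fun k _ => by simp only [hg]; ring)
      have h2 : ∑ k, g k = ∑ k ∈ ({i, j} : Finset (Fin n)), g k := by
        symm
        refine Finset.sum_subset (Finset.subset_univ _) (fun k _ hk => ?_)
        simp only [Finset.mem_insert, Finset.mem_singleton, not_or] at hk
        simp only [hg, hw, if_neg hk.1, if_neg hk.2]
        ring
      have h3 : ∑ k ∈ ({i, j} : Finset (Fin n)), g k = g i + g j :=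
        Finset.sum_pair hij
      have h4 : g i = -2 * ε * (z i - y i) + ε ^ 2 := by
        simp [hg, hw, hij, hij.symm]
        ring
      have h5 : g j = 2 * ε * (z j - y j) + ε ^ 2 := by
        simp [hg, hw, hij, hij.symm]
        ring
      rw [h1, h2, h3, h4, h5]; ring
    have := hmin w hwS
    rw [hdiff] at this
    have hineq : 0 ≤ 2 * ε * (z j - y j) - 2 * ε * (z i - y i) + 2 * ε ^ 2 := by linarith
    -- divide by 2ε > 0
    have : 0 ≤ (z j - y j) - (z i - y i) + ε := by nlinarith
    simp only [hδ] at hεδ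
    linarith
  -- Step 3: construct μ
  rcases eq_or_lt_of_le hθ with hθ0 | hθpos
  · -- θ = 0 : z = 0
    have hzall : ∀ k, z k = 0 := by
      intro k
      have h0 : ∑ i, z i = 0 := by rw [hsz, ← hθ0]
      have := (Finset.sum_eq_zero_iff_of_nonneg (fun i _ => hz0 i)).1 h0
      exact this k (Finset.mem_univ k)
    refine ⟨∑ i, y i + 1, by linarith, fun k => ?_, by rw [hsz]⟩
    have hk : y k ≤ ∑ i, y i :=
      Finset.single_le_sum (fun i _ => hy i) (Finset.mem_univ k)
    rw [hzall k, max_eq_right (by linarith)]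
  · -- θ > 0 : some coordinate of z is positive
    have hex : ∃ i₀, 0 < z i₀ := by
      by_contra h
      push_neg at h
      have : ∀ k, z k = 0 := fun k => le_antisymm (h k) (hz0 k)
      have : ∑ i, z i = 0 := Finset.sum_eq_zero (fun k _ => this k)
      rw [hsz] at this; linarith
    obtain ⟨i₀, hi₀⟩ := hex
    set μ : ℝ := y i₀ - z i₀ with hμ
    have hform : ∀ k, z k = max (y k - μ) 0 := by
      intro k
      by_cases hk : 0 < z k
      · by_cases hki : k = i₀
        · subst hki
          rw [max_eq_left (by simp only [hμ]; linarith)]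
          simp only [hμ]; ring
        · have h1 : y k - z k ≤ μ := hpair i₀ k (fun h => hki h.symm) hi₀
          have h2 : μ ≤ y k - z k := hpair k i₀ hki hk
          have : y k - z k = μ := le_antisymm h1 h2
          rw [max_eq_left (by linarith)]
          linarith
      · have hk0 : z k = 0 := le_antisymm (not_lt.1 hk) (hz0 k)
        have hki : k ≠ i₀ := fun h => hk (h ▸ hi₀)
        have h1 : y k - z k ≤ μ := hpair i₀ k (fun h => hki h.symm) hi₀
        rw [hk0] at h1 ⊢
        rw [max_eq_right (by linarith)]
    have hle : ∀ k, y k - z k ≤ μ := by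
      intro k
      by_cases hki : k = i₀
      · subst hki; simp [hμ]
      · exact hpair i₀ k (fun h => hki h.symm) hi₀
    have hμpos : 0 < μ := by
      have hpossum : (0:ℝ) < ∑ i, (y i - z i) := by
        rw [Finset.sum_sub_distrib, hsz]; linarith
      have : ∑ _i : Fin n, (0:ℝ) < ∑ i, (y i - z i) := by simpa using hpossum
      obtain ⟨k, _, hk⟩ := Finset.exists_lt_of_sum_lt this
      exact lt_of_lt_of_le hk (hle k)
    exact ⟨μ, hμpos, hform, hsz⟩
end

section
/- Optimality characterization (Lemma 1): let Y ∈ R_+^{n×m} with ‖Y‖_{1,∞} > C > 0 and let X be the projection of Y onto Δ^C_{1,∞}. Then there exists θ ≥ 0 such that for every column j: either the column maximum μ_j = max_i X_{i,j} is positive and Σ_i (Y_{i,j} − X_{i,j}) = θ, or μ_j = 0, Σ_i Y_{i,j} ≤ θ, and X_{i,j} = 0 for all i. -/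
lemma sum_sum_ite_pt {n m : ℕ} (i0 : Fin n) (j0 : Fin m) (a : ℝ) :
    ∑ i : Fin n, ∑ j : Fin m, (if i = i0 ∧ j = j0 then a else 0) = a := by
  have h : ∀ (i : Fin n) (j : Fin m), (if i = i0 ∧ j = j0 then a else 0)
      = if i = i0 then (if j = j0 then a else 0) else 0 := by
    intro i j; by_cases h1 : i = i0 <;> by_cases h2 : j = j0 <;> simp [h1, h2]
  simp_rw [h]
  rw [Finset.sum_comm]
  simp [Finset.sum_ite_eq' Finset.univ]

/-- single-entry perturbation: if replacing entry (i0,j0) by `c ≥ 0` keeps the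
l1inf constraint, then the entry of the projection beats `c`. -/
lemma single_entry {n m : ℕ} {C : ℝ} {Y X : Matrix (Fin n) (Fin m) ℝ}
    (hX : IsProjM (l1infSimplex n m C) Y X) (i0 : Fin n) (j0 : Fin m) (c : ℝ)
    (hc0 : 0 ≤ c)
    (hsup : l1inf (fun i j => if i = i0 ∧ j = j0 then c else X i j) ≤ C) :
    (X i0 j0 - Y i0 j0) ^ 2 ≤ (c - Y i0 j0) ^ 2 := by
  set Z : Matrix (Fin n) (Fin m) ℝ := fun i j => if i = i0 ∧ j = j0 then c else X i j with hZdef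
  have hZ : Z ∈ l1infSimplex n m C := by
    refine ⟨hsup, fun i j => ?_⟩
    simp only [hZdef]
    split_ifs with h
    · exact hc0
    · exact hX.1.2 i j
  have h := hX.2 Z hZ
  have hsum : ∑ i, ∑ j, (Z i j - Y i j) ^ 2
      = ∑ i, ∑ j, ((X i j - Y i j) ^ 2
        + (if i = i0 ∧ j = j0 then (c - Y i0 j0) ^ 2 - (X i0 j0 - Y i0 j0) ^ 2 else 0)) := by
    refine Finset.sum_congr rfl fun i _ => Finset.sum_congr rfl fun j _ => ?_
    simp only [hZdef]
    split_ifs with h'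
    · obtain ⟨rfl, rfl⟩ := h'; ring
    · ring
  rw [hsum] at h
  simp only [Finset.sum_add_distrib, sum_sum_ite_pt] at h
  linarith
lemma l1inf_update_le {n m : ℕ} [Nonempty (Fin n)] (X : Matrix (Fin n) (Fin m) ℝ)
    (i0 : Fin n) (j0 : Fin m) (c : ℝ) (δ : ℝ) (hδ : 0 ≤ δ) (hc0 : 0 ≤ c)
    (hc : c ≤ (⨆ i, |X i j0|) + δ) :
    l1inf (fun i j => if i = i0 ∧ j = j0 then c else X i j) ≤ l1inf X + δ := by
  have key : l1inf (fun i j => if i = i0 ∧ j = j0 then c else X i j)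
      ≤ ∑ j, ((⨆ i, |X i j|) + if j = j0 then δ else 0) := by
    refine Finset.sum_le_sum fun j _ => ?_
    refine ciSup_le fun i => ?_
    by_cases h : i = i0 ∧ j = j0
    · obtain ⟨rfl, rfl⟩ := h
      simpa [abs_of_nonneg hc0] using hc
    · have h2 : |X i j| ≤ ⨆ i, |X i j| := le_ciSup (Finite.bddAbove_range fun i => |X i j|) i
      have h3 : (0:ℝ) ≤ if j = j0 then δ else 0 := by positivity
      simp only [h, if_false]
      linarith
  calc l1inf (fun i j => if i = i0 ∧ j = j0 then c else X i j)
      ≤ ∑ j, ((⨆ i, |X i j|) + if j = j0 then δ else 0) := key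
    _ = l1inf X + δ := by
        rw [Finset.sum_add_distrib, Finset.sum_ite_eq' Finset.univ j0]
        simp [l1inf]

lemma proj_le {n m : ℕ} {C : ℝ} {Y X : Matrix (Fin n) (Fin m) ℝ} [Nonempty (Fin n)]
    (hY : ∀ i j, 0 ≤ Y i j) (hX : IsProjM (l1infSimplex n m C) Y X) :
    ∀ i j, X i j ≤ Y i j := by
  intro i0 j0
  by_contra h
  push_neg at h
  have hXY : (X i0 j0 - Y i0 j0) ^ 2 ≤ (Y i0 j0 - Y i0 j0) ^ 2 := by
    refine single_entry hX i0 j0 (Y i0 j0) (hY i0 j0) ?_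
    have := l1inf_update_le X i0 j0 (Y i0 j0) 0 le_rfl (hY i0 j0) ?_
    · linarith [hX.1.1]
    · have h1 : Y i0 j0 ≤ |X i0 j0| := le_trans h.le (le_abs_self _)
      have h2 : |X i0 j0| ≤ ⨆ i, |X i j0| :=
        le_ciSup (Finite.bddAbove_range fun i => |X i j0|) i0
      linarith
  nlinarith

lemma proj_nonmax {n m : ℕ} {C : ℝ} {Y X : Matrix (Fin n) (Fin m) ℝ} [Nonempty (Fin n)]
    (hY : ∀ i j, 0 ≤ Y i j) (hX : IsProjM (l1infSimplex n m C) Y X) :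
    ∀ i j, X i j < (⨆ i', X i' j) → X i j = Y i j := by
  intro i0 j0 hlt
  have habs : ∀ i, |X i j0| = X i j0 := fun i => abs_of_nonneg (hX.1.2 i j0)
  have hsupeq : (⨆ i, |X i j0|) = ⨆ i, X i j0 := by
    exact iSup_congr habs
  by_contra h
  have hle : X i0 j0 ≤ Y i0 j0 := proj_le hY hX i0 j0
  have h' : X i0 j0 < Y i0 j0 := lt_of_le_of_ne hle h
  set c := min (Y i0 j0) (⨆ i', X i' j0) with hc
  have hc0 : 0 ≤ c := le_min (hY i0 j0) (le_trans (hX.1.2 i0 j0) (le_of_lt hlt))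
  have hcgt : X i0 j0 < c := lt_min h' hlt
  have hcle : c ≤ Y i0 j0 := min_le_left _ _
  have key : (X i0 j0 - Y i0 j0) ^ 2 ≤ (c - Y i0 j0) ^ 2 := by
    refine single_entry hX i0 j0 c hc0 ?_
    have := l1inf_update_le X i0 j0 c 0 le_rfl hc0 ?_
    · linarith [hX.1.1]
    · rw [hsupeq]
      have := min_le_right (Y i0 j0) (⨆ i', X i' j0)
      linarith
  nlinarith

lemma proj_active {n m : ℕ} {C : ℝ} {Y X : Matrix (Fin n) (Fin m) ℝ} [Nonempty (Fin n)]
    (hY : ∀ i j, 0 ≤ Y i j) (hYC : C < l1inf Y) (hX : IsProjM (l1infSimplex n m C) Y X) :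
    l1inf X = C := by
  rcases eq_or_lt_of_le hX.1.1 with h | h
  · exact h
  exfalso
  have hXeqY : ∀ i j, X i j = Y i j := by
    intro i0 j0
    by_contra hne
    have hle : X i0 j0 ≤ Y i0 j0 := proj_le hY hX i0 j0
    have h' : X i0 j0 < Y i0 j0 := lt_of_le_of_ne hle hne
    set δ := C - l1inf X with hδ
    have hδpos : 0 < δ := by simp [hδ]; linarith
    set c := min (Y i0 j0) (X i0 j0 + δ) with hc
    have hc0 : 0 ≤ c := le_min (hY i0 j0) (by linarith [hX.1.2 i0 j0])
    have hcgt : X i0 j0 < c := lt_min h' (by linarith)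
    have hcle : c ≤ Y i0 j0 := min_le_left _ _
    have key : (X i0 j0 - Y i0 j0) ^ 2 ≤ (c - Y i0 j0) ^ 2 := by
      refine single_entry hX i0 j0 c hc0 ?_
      have hb : c ≤ (⨆ i, |X i j0|) + δ := by
        have h1 : X i0 j0 ≤ |X i0 j0| := le_abs_self _
        have h2 : |X i0 j0| ≤ ⨆ i, |X i j0| :=
          le_ciSup (Finite.bddAbove_range fun i => |X i j0|) i0
        have := min_le_right (Y i0 j0) (X i0 j0 + δ)
        linarith
      have := l1inf_update_le X i0 j0 c δ hδpos.le hc0 hb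
      linarith
    nlinarith
  have : l1inf X = l1inf Y := by
    unfold l1inf
    refine Finset.sum_congr rfl fun j _ => ?_
    exact iSup_congr fun i => by rw [hXeqY]
  linarith

lemma transfer {n m : ℕ} {C : ℝ} {Y X : Matrix (Fin n) (Fin m) ℝ} [Nonempty (Fin n)]
    (hY : ∀ i j, 0 ≤ Y i j) (hX : IsProjM (l1infSimplex n m C) Y X)
    (j k : Fin m) (hjk : j ≠ k) (hj : 0 < ⨆ i, X i j) :
    ∑ i, (Y i k - X i k) ≤ ∑ i, (Y i j - X i j) := by
  classical
  have hX0 : ∀ i j', 0 ≤ X i j' := hX.1.2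
  have habs : ∀ i j', |X i j'| = X i j' := fun i j' => abs_of_nonneg (hX0 i j')
  have hsupeq : ∀ j', (⨆ i, |X i j'|) = ⨆ i, X i j' := fun j' => iSup_congr fun i => habs i j'
  set μ : Fin m → ℝ := fun j' => ⨆ i, X i j' with hμ
  have hXle : ∀ i j', X i j' ≤ μ j' :=
    fun i j' => le_ciSup (Finite.bddAbove_range fun i => X i j') i
  have hnonmax : ∀ i j', X i j' < μ j' → X i j' = Y i j' := proj_nonmax hY hX
  -- gap
  obtain ⟨ε0, hε0, hε0μ, hgap⟩ :
      ∃ ε0, 0 < ε0 ∧ ε0 ≤ μ j ∧ ∀ i, X i j ≠ μ j → X i j ≤ μ j - ε0 := by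
    set T := Finset.univ.filter (fun i => X i j ≠ μ j) with hT
    by_cases hTne : T.Nonempty
    · refine ⟨min (μ j) (T.inf' hTne fun i => μ j - X i j), ?_, min_le_left _ _, ?_⟩
      · refine lt_min hj ?_
        rw [Finset.lt_inf'_iff]
        intro i hi
        have : X i j ≠ μ j := (Finset.mem_filter.mp hi).2
        have := lt_of_le_of_ne (hXle i j) this
        linarith
      · intro i hi
        have hmem : i ∈ T := Finset.mem_filter.mpr ⟨Finset.mem_univ i, hi⟩
        have := Finset.inf'_le (fun i => μ j - X i j) hmem
        have := min_le_right (μ j) (T.inf' hTne fun i => μ j - X i j)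
        linarith
    · refine ⟨μ j, hj, le_rfl, fun i hi => absurd ?_ hTne⟩
      exact ⟨i, Finset.mem_filter.mpr ⟨Finset.mem_univ i, hi⟩⟩
  -- key inequality for all small ε
  have key : ∀ ε : ℝ, 0 < ε → ε ≤ ε0 →
      0 ≤ 2*ε*(∑ i, (Y i j - X i j)) - 2*ε*(∑ i, (Y i k - X i k)) + 2*(n:ℝ)*ε^2 := by
    intro ε hε hεε0
    set Z : Matrix (Fin n) (Fin m) ℝ := fun i j' =>
      if j' = j then (if X i j = μ j then μ j - ε else X i j)
      else if j' = k then (if X i k = μ k then X i k + ε else X i k)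
      else X i j' with hZdef
    have hZnn : ∀ i j', 0 ≤ Z i j' := by
      intro i j'
      simp only [hZdef]
      split_ifs with h1 h2 h3 h4
      · linarith
      · exact hX0 i j
      · linarith [hX0 i k]
      · exact hX0 i k
      · exact hX0 i j'
    have hZj : ∀ i, Z i j = if X i j = μ j then μ j - ε else X i j := by
      intro i; simp [hZdef]
    have hZk : ∀ i, Z i k = if X i k = μ k then X i k + ε else X i k := by
      intro i; simp [hZdef, (Ne.symm hjk : k ≠ j)]
    have hZo : ∀ i j', j' ≠ j → j' ≠ k → Z i j' = X i j' := by
      intro i j' h1 h2; simp [hZdef, h1, h2]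
    have hZcol : ∀ j', (⨆ i, |Z i j'|) ≤ (⨆ i, |X i j'|)
        + ((if j' = j then -ε else 0) + (if j' = k then ε else 0)) := by
      intro j'
      refine ciSup_le fun i => ?_
      rw [abs_of_nonneg (hZnn i j'), hsupeq j']
      by_cases h1 : j' = j
      · subst h1
        rw [if_pos rfl, if_neg hjk, hZj i]
        split_ifs with h2
        · linarith
        · have := hgap i h2
          linarith
      · by_cases h3 : j' = k
        · subst h3
          rw [if_neg h1, if_pos rfl, hZk i]
          split_ifs with h2
          · linarith [hXle i j']
          · linarith [hXle i j']
        · rw [if_neg h1, if_neg h3, hZo i j' h1 h3]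
          linarith [hXle i j']
    have hZl1 : l1inf Z ≤ C := by
      have step : l1inf Z ≤ ∑ j', ((⨆ i, |X i j'|)
          + ((if j' = j then -ε else 0) + (if j' = k then ε else 0))) :=
        Finset.sum_le_sum fun j' _ => hZcol j'
      have eq1 : ∑ j', ((⨆ i, |X i j'|)
          + ((if j' = j then -ε else 0) + (if j' = k then ε else 0))) = l1inf X := by
        rw [Finset.sum_add_distrib, Finset.sum_add_distrib,
          Finset.sum_ite_eq' Finset.univ j, Finset.sum_ite_eq' Finset.univ k]
        simp [l1inf]
      rw [eq1] at step
      linarith [hX.1.1]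
    have hZmem : Z ∈ l1infSimplex n m C := ⟨hZl1, hZnn⟩
    have hcost := hX.2 Z hZmem
    have hent : ∀ i j', (Z i j' - Y i j') ^ 2 ≤ (X i j' - Y i j') ^ 2
        + ((if j' = j then 2*ε*(Y i j - X i j) + ε^2 else 0)
          + (if j' = k then -(2*ε*(Y i k - X i k)) + ε^2 else 0)) := by
      intro i j'
      by_cases h1 : j' = j
      · subst h1
        rw [if_pos rfl, if_neg hjk, hZj i, add_zero]
        split_ifs with h2
        · rw [← h2]; nlinarith [sq_nonneg ε]
        · have hXeqY : X i j' = Y i j' := hnonmax i j' (lt_of_le_of_ne (hXle i j') h2)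
          rw [hXeqY]
          nlinarith [sq_nonneg ε]
      · by_cases h3 : j' = k
        · subst h3
          rw [if_neg h1, if_pos rfl, hZk i, zero_add]
          split_ifs with h2
          · nlinarith [sq_nonneg ε]
          · have hXeqY : X i j' = Y i j' := hnonmax i j' (lt_of_le_of_ne (hXle i j') h2)
            rw [hXeqY]
            nlinarith [sq_nonneg ε]
        · rw [if_neg h1, if_neg h3, hZo i j' h1 h3]
          simp
    have hsum2 : ∑ i, ∑ j', (Z i j' - Y i j') ^ 2 ≤ ∑ i, ∑ j', ((X i j' - Y i j') ^ 2
        + ((if j' = j then 2*ε*(Y i j - X i j) + ε^2 else 0)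
          + (if j' = k then -(2*ε*(Y i k - X i k)) + ε^2 else 0))) :=
      Finset.sum_le_sum fun i _ => Finset.sum_le_sum fun j' _ => hent i j'
    have hRHS : ∑ i, ∑ j', ((X i j' - Y i j') ^ 2
        + ((if j' = j then 2*ε*(Y i j - X i j) + ε^2 else 0)
          + (if j' = k then -(2*ε*(Y i k - X i k)) + ε^2 else 0)))
        = (∑ i, ∑ j', (X i j' - Y i j') ^ 2)
          + (2*ε*(∑ i, (Y i j - X i j)) + (n:ℝ)*ε^2)
          + (-(2*ε*(∑ i, (Y i k - X i k))) + (n:ℝ)*ε^2) := by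
      simp only [Finset.sum_add_distrib, Finset.sum_ite_eq' Finset.univ, Finset.mem_univ,
        if_true, Finset.sum_neg_distrib, ← Finset.mul_sum, Finset.sum_const,
        Finset.card_univ, Fintype.card_fin, nsmul_eq_mul]
      ring
    rw [hRHS] at hsum2
    have := le_trans hcost hsum2
    linarith
  -- limit argument
  by_contra hcon
  push_neg at hcon
  set rj := ∑ i, (Y i j - X i j) with hrj
  set rk := ∑ i, (Y i k - X i k) with hrk
  set d := rk - rj with hd
  have hdpos : 0 < d := by simp [hd]; linarith
  set ε := min ε0 (d / (2*(n:ℝ)+2)) with hε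
  have hεpos : 0 < ε := lt_min hε0 (by positivity)
  have h := key ε hεpos (min_le_left _ _)
  have h1 : ε ≤ d / (2*(n:ℝ)+2) := min_le_right _ _
  have h2 : (n:ℝ) * ε < d := by
    have hn0 : (0:ℝ) ≤ (n:ℝ) := Nat.cast_nonneg n
    have : (n:ℝ) * ε ≤ (n:ℝ) * (d / (2*(n:ℝ)+2)) := by nlinarith
    have h3 : (n:ℝ) * (d / (2*(n:ℝ)+2)) < d := by
      rw [mul_div_assoc']
      rw [div_lt_iff₀ (by positivity)]
      nlinarith
    linarith
  nlinarith

/-- KKT optimality characterization (Lemma 1): at the projection of `Y` onto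
`Δ^C_{1,∞}`, there is `θ ≥ 0` such that each column either has positive maximum
`μ_j` with residual `Σ_i (Y_{i,j} − X_{i,j}) = θ`, or is entirely zero with
`Σ_i Y_{i,j} ≤ θ`. -/
theorem stmt10 {n m : ℕ} (hn : 0 < n) (C : ℝ) (hC : 0 < C)
    (Y : Matrix (Fin n) (Fin m) ℝ) (hY : ∀ i j, 0 ≤ Y i j)
    (hYC : C < l1inf Y) (X : Matrix (Fin n) (Fin m) ℝ)
    (hX : IsProjM (l1infSimplex n m C) Y X) :
    ∃ θ : ℝ, 0 ≤ θ ∧ ∀ j,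
      (0 < (⨆ i, X i j) ∧ ∑ i, (Y i j - X i j) = θ) ∨
      ((⨆ i, X i j) = 0 ∧ ∑ i, Y i j ≤ θ ∧ ∀ i, X i j = 0) := by
  haveI : Nonempty (Fin n) := ⟨⟨0, hn⟩⟩
  have hX0 : ∀ i j, 0 ≤ X i j := hX.1.2
  have habs : ∀ i j', |X i j'| = X i j' := fun i j' => abs_of_nonneg (hX0 i j')
  have hsupeq : ∀ j', (⨆ i, |X i j'|) = ⨆ i, X i j' := fun j' => iSup_congr fun i => habs i j'
  have hXle : ∀ i j', X i j' ≤ ⨆ i', X i' j' :=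
    fun i j' => le_ciSup (Finite.bddAbove_range fun i' => X i' j') i
  have hμ0 : ∀ j', 0 ≤ ⨆ i, X i j' := fun j' => le_trans (hX0 ⟨0, hn⟩ j') (hXle _ _)
  have hactive : l1inf X = C := proj_active hY hYC hX
  have hsum : ∑ j', (⨆ i, X i j') = C := by
    rw [← hactive]
    exact Finset.sum_congr rfl fun j' _ => (hsupeq j').symm
  obtain ⟨j0, hj0⟩ : ∃ j0, 0 < ⨆ i, X i j0 := by
    by_contra h
    push_neg at h
    have hz : ∀ j', (⨆ i, X i j') = 0 := fun j' => le_antisymm (h j') (hμ0 j')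
    have : (C : ℝ) = 0 := by rw [← hsum]; simp [hz]
    linarith
  refine ⟨∑ i, (Y i j0 - X i j0), ?_, ?_⟩
  · apply Finset.sum_nonneg
    intro i _
    have := proj_le hY hX i j0
    linarith
  intro j
  rcases lt_or_eq_of_le (hμ0 j) with hpos | hzero
  · left
    refine ⟨hpos, ?_⟩
    by_cases hjj : j = j0
    · subst hjj; rfl
    · exact le_antisymm (transfer hY hX j0 j (Ne.symm hjj) hj0)
        (transfer hY hX j j0 hjj hpos)
  · right
    have hz : ∀ i, X i j = 0 := fun i => le_antisymm (hzero ▸ hXle i j) (hX0 i j)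
    refine ⟨hzero.symm, ?_, hz⟩
    have hne : j0 ≠ j := by
      intro h
      rw [h] at hj0
      rw [← hzero] at hj0
      exact lt_irrefl _ hj0
    have htr := transfer hY hX j0 j hne hj0
    calc ∑ i, Y i j = ∑ i, (Y i j - X i j) := by
          refine Finset.sum_congr rfl fun i _ => ?_
          rw [hz i]; ring
      _ ≤ _ := htr
end

section
/- Column-wise decomposition of the ℓ_{1,∞} simplex projection (Proposition 1): let Y = [y_1 ⋯ y_m] ∈ R_+^{n×m} with ‖Y‖_{1,∞} > C. Then there exists θ ≥ 0 (as in the KKT characterization) such that P_{Δ^C_{1,∞}}(Y) = [y_1 − P_{Δ^θ_1}(y_1), …, y_m − P_{Δ^θ_1}(y_m)], where P_{Δ^θ_1} is the Euclidean projection onto the solid simplex {x ∈ R_+^n : Σ_i x_i ≤ θ}. -/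
section Aux

lemma csup_attained {n : ℕ} [Nonempty (Fin n)] (f : Fin n → ℝ) :
    ∃ i, (⨆ k, f k) = f i ∧ ∀ k, f k ≤ f i := by
  obtain ⟨i, hi⟩ := Finite.exists_max f
  exact ⟨i, le_antisymm (ciSup_le hi) (le_ciSup (Set.finite_range f).bddAbove i), hi⟩

lemma csup_le' {n : ℕ} [Nonempty (Fin n)] {f : Fin n → ℝ} {c : ℝ} (h : ∀ i, f i ≤ c) :
    (⨆ k, f k) ≤ c := ciSup_le h

lemma le_csup' {n : ℕ} (f : Fin n → ℝ) (i : Fin n) : f i ≤ ⨆ k, f k :=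
  le_ciSup (Set.finite_range f).bddAbove i

lemma clamp_sq (a y t : ℝ) (ha0 : 0 ≤ a) (hat : a ≤ t) (hy : 0 ≤ y) :
    (min y t - y)^2 ≤ (a - y)^2 ∧ ((min y t - y)^2 = (a - y)^2 → a = min y t) := by
  rcases le_total y t with h | h
  · rw [min_eq_left h]
    constructor
    · nlinarith [sq_nonneg (a - y)]
    · intro he; nlinarith [sq_nonneg (a - y)]
  · rw [min_eq_right h]
    constructor
    · nlinarith
    · intro he; nlinarith

lemma sq_diff_bounds (a s t : ℝ) (hst : s ≤ t) :
    2*(t-s)*max (a-t) 0 ≤ (min a s - a)^2 - (min a t - a)^2 ∧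
    (min a s - a)^2 - (min a t - a)^2 ≤ 2*(t-s)*max (a-s) 0 := by
  rcases le_total a s with h1 | h1
  · rw [min_eq_left h1, min_eq_left (h1.trans hst), max_eq_right (by linarith),
      max_eq_right (by linarith)]
    simp
  · rw [min_eq_right h1]
    rcases le_total a t with h2 | h2
    · rw [min_eq_left h2, max_eq_right (a := a - t) (by linarith),
        max_eq_left (a := a - s) (by linarith)]
      constructor <;> nlinarith
    · rw [min_eq_right h2, max_eq_left (a := a - t) (by linarith),
        max_eq_left (a := a - s) (by linarith)]
      constructor <;> nlinarith

lemma max_sub_le (a s t : ℝ) (hst : s ≤ t) : max (a - s) 0 ≤ max (a - t) 0 + (t - s) := by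
  apply max_le
  · have : a - t ≤ max (a-t) 0 := le_max_left _ _
    linarith
  · have : (0:ℝ) ≤ max (a-t) 0 := le_max_right _ _
    linarith

lemma sub_min_eq_max (y t : ℝ) : y - min y t = max (y - t) 0 := by
  rcases le_total y t with h | h
  · rw [min_eq_left h, max_eq_right (by linarith)]; ring
  · rw [min_eq_right h, max_eq_left (by linarith)]

end Aux

set_option maxHeartbeats 1000000 in
/-- Column-wise decomposition (Proposition 1): there is a KKT threshold `θ ≥ 0`
such that every column of the projection of `Y` onto `Δ^C_{1,∞}` equals
`y_j − P_{Δ^θ_1}(y_j)`. -/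
theorem stmt11 {n m : ℕ} (hn : 0 < n) (C : ℝ) (hC : 0 < C)
    (Y : Matrix (Fin n) (Fin m) ℝ) (hY : ∀ i j, 0 ≤ Y i j)
    (hYC : C < l1inf Y) (X : Matrix (Fin n) (Fin m) ℝ)
    (hX : IsProjM (l1infSimplex n m C) Y X) :
    ∃ θ : ℝ, 0 ≤ θ ∧
      (∀ j, (0 < (⨆ i, X i j) ∧ ∑ i, (Y i j - X i j) = θ) ∨
        ((⨆ i, X i j) = 0 ∧ ∑ i, Y i j ≤ θ ∧ ∀ i, X i j = 0)) ∧
      ∀ j (z : Fin n → ℝ), IsProjV (solidSimplex n θ) (fun i => Y i j) z →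
        ∀ i, X i j = Y i j - z i := by
  haveI : Nonempty (Fin n) := ⟨⟨0, hn⟩⟩
  obtain ⟨⟨hXl1, hX0⟩, hXopt⟩ := hX
  set t : Fin m → ℝ := fun j => ⨆ i, X i j with ht_def
  have htj : ∀ j, (⨆ i, X i j) = t j := fun j => by rw [ht_def]
  have hl1X : l1inf X = ∑ j, t j := by
    unfold l1inf
    exact Finset.sum_congr rfl fun j _ =>
      (iSup_congr fun i => abs_of_nonneg (hX0 i j)).trans (htj j).symm ▸ rfl
  have htle : ∀ i j, X i j ≤ t j := fun i j => le_of_le_of_eq (le_csup' (fun k => X k j) i) (htj j)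
  have ht0 : ∀ j, 0 ≤ t j := fun j => (hX0 ⟨0, hn⟩ j).trans (htle _ j)
  have htsum : ∑ j, t j ≤ C := hl1X ▸ hXl1
  -- Step B : X i j = min (Y i j) (t j)
  have hXeq : ∀ i j, X i j = min (Y i j) (t j) := by
    set Z : Matrix (Fin n) (Fin m) ℝ := Matrix.of fun i j => min (Y i j) (t j) with hZ_def
    have hZe : ∀ i j, Z i j = min (Y i j) (t j) := fun i j => rfl
    have hZmem : Z ∈ l1infSimplex n m C := by
      constructor
      · have : l1inf Z ≤ ∑ j, t j := by
          unfold l1inf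
          apply Finset.sum_le_sum
          intro j _
          apply csup_le'
          intro i
          rw [hZe, abs_of_nonneg (le_min (hY i j) (ht0 j))]
          exact min_le_right _ _
        linarith
      · intro i j
        rw [hZe]
        exact le_min (hY i j) (ht0 j)
    have hle : ∀ i j, (Z i j - Y i j)^2 ≤ (X i j - Y i j)^2 := fun i j =>
      (clamp_sq (X i j) (Y i j) (t j) (hX0 i j) (htle i j) (hY i j)).1
    have hsum_eq : ∑ i, ∑ j, (Z i j - Y i j)^2 = ∑ i, ∑ j, (X i j - Y i j)^2 :=
      le_antisymm
        (Finset.sum_le_sum fun i _ => Finset.sum_le_sum fun j _ => hle i j)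
        (hXopt Z hZmem)
    intro i j
    have h1 := (Finset.sum_eq_sum_iff_of_le
      (fun i (_ : i ∈ Finset.univ) => Finset.sum_le_sum
        (fun j (_ : j ∈ Finset.univ) => hle i j))).mp hsum_eq i (Finset.mem_univ i)
    have h2 := (Finset.sum_eq_sum_iff_of_le
      (fun j (_ : j ∈ Finset.univ) => hle i j)).mp h1 j (Finset.mem_univ j)
    exact (clamp_sq (X i j) (Y i j) (t j) (hX0 i j) (htle i j) (hY i j)).2 h2
  have hXY' : ∀ i j, X i j ≤ Y i j := fun i j => (hXeq i j) ▸ min_le_left _ _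
  -- the distance is positive
  have hD0 : 0 < ∑ i, ∑ j, (X i j - Y i j)^2 := by
    rcases (Finset.sum_nonneg fun i _ => Finset.sum_nonneg fun j _ =>
      sq_nonneg (X i j - Y i j)).lt_or_eq with h | h
    · exact h
    · exfalso
      have hz : ∀ i j, X i j = Y i j := by
        intro i j
        have h1 := (Finset.sum_eq_zero_iff_of_nonneg
          (fun i (_ : i ∈ Finset.univ) => Finset.sum_nonneg fun j _ =>
            sq_nonneg (X i j - Y i j))).mp h.symm i (Finset.mem_univ i)
        have h2 := (Finset.sum_eq_zero_iff_of_nonneg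
          (fun j (_ : j ∈ Finset.univ) => sq_nonneg (X i j - Y i j))).mp h1 j
          (Finset.mem_univ j)
        have := sq_eq_zero_iff.mp h2
        linarith
      have : l1inf X = l1inf Y := by
        unfold l1inf
        exact Finset.sum_congr rfl fun j _ => iSup_congr fun i => by rw [hz i j]
      linarith
  -- Step C : ∑ t = C
  have hsumC : ∑ j, t j = C := by
    rcases htsum.lt_or_eq with hlt | h
    · exfalso
      set T : Fin m → ℝ := fun j => ⨆ i, Y i j with hT_def
      have hTle : ∀ i j, Y i j ≤ T j := fun i j => le_csup' (fun k => Y k j) i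
      have hl1Y : l1inf Y = ∑ j, T j := by
        unfold l1inf
        exact Finset.sum_congr rfl fun j _ => iSup_congr fun i => abs_of_nonneg (hY i j)
      have hTC : C < ∑ j, T j := hl1Y ▸ hYC
      set ε : ℝ := (C - ∑ j, t j) / (∑ j, T j - ∑ j, t j) with hε_def
      have hden : 0 < ∑ j, T j - ∑ j, t j := by linarith
      have hε0 : 0 < ε := div_pos (by linarith) hden
      have hε1 : ε < 1 := (div_lt_one hden).mpr (by linarith)
      set Z : Matrix (Fin n) (Fin m) ℝ :=
        Matrix.of fun i j => X i j + ε * (Y i j - X i j) with hZ_def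
      have hZe : ∀ i j, Z i j = X i j + ε * (Y i j - X i j) := fun i j => rfl
      have hZmem : Z ∈ l1infSimplex n m C := by
        constructor
        · have hb : ∀ j, (⨆ i, |Z i j|) ≤ t j + ε * (T j - t j) := by
            intro j
            apply csup_le'
            intro i
            rw [hZe, abs_of_nonneg (by nlinarith [hX0 i j, hXY' i j])]
            nlinarith [htle i j, hTle i j, hXY' i j]
          have : l1inf Z ≤ ∑ j, (t j + ε * (T j - t j)) := by
            unfold l1inf
            exact Finset.sum_le_sum fun j _ => hb j
          have heq : ∑ j, (t j + ε * (T j - t j)) = C := by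
            rw [Finset.sum_add_distrib, ← Finset.mul_sum, Finset.sum_sub_distrib]
            rw [hε_def]
            field_simp
            ring
          linarith
        · intro i j
          rw [hZe]
          nlinarith [hX0 i j, hXY' i j]
      have hcmp := hXopt Z hZmem
      have : ∑ i, ∑ j, (Z i j - Y i j)^2 = (1-ε)^2 * ∑ i, ∑ j, (X i j - Y i j)^2 := by
        rw [Finset.mul_sum]
        apply Finset.sum_congr rfl
        intro i _
        rw [Finset.mul_sum]
        apply Finset.sum_congr rfl
        intro j _
        rw [hZe]
        ring
      have h2 : (1-ε)^2 < 1 := by nlinarith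
      have := mul_lt_mul_of_pos_right h2 hD0
      linarith
    · exact h
  -- the marginal function φ
  set φ : Fin m → ℝ → ℝ := fun j s => ∑ i, max (Y i j - s) 0 with hφ_def
  have hφe : ∀ j s, φ j s = ∑ i, max (Y i j - s) 0 := fun j s => by rw [hφ_def]
  have hφX : ∀ j, ∑ i, (Y i j - X i j) = φ j (t j) := by
    intro j
    rw [hφe]
    exact Finset.sum_congr rfl fun i _ => by rw [hXeq i j, sub_min_eq_max]
  have hφ0 : ∀ j s, 0 ≤ φ j s := fun j s => by
    rw [hφe]; exact Finset.sum_nonneg fun i _ => le_max_right _ _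
  have hφlip : ∀ j s u, s ≤ u → φ j s ≤ φ j u + n * (u - s) := by
    intro j s u hsu
    rw [hφe, hφe]
    calc ∑ i, max (Y i j - s) 0 ≤ ∑ i, (max (Y i j - u) 0 + (u - s)) :=
          Finset.sum_le_sum fun i _ => max_sub_le (Y i j) s u hsu
      _ = ∑ i, max (Y i j - u) 0 + n * (u - s) := by
          rw [Finset.sum_add_distrib, Finset.sum_const, Finset.card_univ,
            Fintype.card_fin, nsmul_eq_mul]
  -- Step D : exchange argument
  have hexch : ∀ j k, j ≠ k → 0 < t j → φ k (t k) ≤ φ j (t j) := by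
    intro j k hjk htjpos
    by_contra hcon
    push_neg at hcon
    set δ : ℝ := φ k (t k) - φ j (t j) with hδ_def
    have hδ : 0 < δ := by rw [hδ_def]; linarith
    set ε : ℝ := min (t j) (δ / (2*n+2)) with hε_def
    have hNpos : (0:ℝ) < 2*n+2 := by positivity
    have hε0 : 0 < ε := lt_min htjpos (div_pos hδ hNpos)
    have hεt : ε ≤ t j := min_le_left _ _
    have hεδ : 2*n*ε < δ := by
      have h1 : ε ≤ δ / (2*n+2) := min_le_right _ _
      have h2 : 2*(n:ℝ)*(δ/(2*n+2)) < δ := by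
        rw [mul_div_assoc', div_lt_iff₀ hNpos]; nlinarith
      nlinarith [mul_le_mul_of_nonneg_left h1 (by positivity : (0:ℝ) ≤ 2*(n:ℝ))]
    set Z : Matrix (Fin n) (Fin m) ℝ := Matrix.of fun i j' =>
      if j' = j then min (Y i j') (t j - ε)
      else if j' = k then min (Y i j') (t k + ε) else X i j' with hZ_def
    have hZe : ∀ i j', Z i j' = if j' = j then min (Y i j') (t j - ε)
      else if j' = k then min (Y i j') (t k + ε) else X i j' := fun i j' => rfl
    have hZmem : Z ∈ l1infSimplex n m C := by
      constructor
      · have hb : ∀ j', (⨆ i, |Z i j'|) ≤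
            (if j' = j then t j - ε else if j' = k then t k + ε else t j') := by
          intro j'
          apply csup_le'
          intro i
          rw [hZe]
          split_ifs with h1 h2
          · rw [abs_of_nonneg (le_min (hY i j') (by linarith))]
            exact min_le_right _ _
          · rw [abs_of_nonneg (le_min (hY i j') (add_nonneg (ht0 k) hε0.le))]
            exact min_le_right _ _
          · rw [abs_of_nonneg (hX0 i j')]
            exact htle i j'
        have hsum' : ∑ j', (if j' = j then t j - ε else if j' = k then t k + ε else t j')
            = ∑ j', t j' := by
          have he : ∀ j', (if j' = j then t j - ε else if j' = k then t k + ε else t j')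
              = t j' + ((if j' = j then -ε else 0) + (if j' = k then ε else 0)) := by
            intro j'
            rcases eq_or_ne j' j with rfl | h1
            · simp only [eq_self_iff_true, if_true, if_neg hjk]; ring
            · rcases eq_or_ne j' k with rfl | h2
              · simp only [if_neg h1, eq_self_iff_true, if_true]; ring
              · simp only [if_neg h1, if_neg h2]; ring
          rw [Finset.sum_congr rfl fun j' _ => he j', Finset.sum_add_distrib,
            Finset.sum_add_distrib, Finset.sum_ite_eq' Finset.univ j fun _ => -ε,
            Finset.sum_ite_eq' Finset.univ k fun _ => ε]
          simp
        have : l1inf Z ≤ ∑ j', (if j' = j then t j - ε else if j' = k then t k + ε else t j') := by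
          unfold l1inf
          exact Finset.sum_le_sum fun j' _ => hb j'
        rw [hsum', hsumC] at this
        exact this
      · intro i j'
        rw [hZe]
        split_ifs with h1 h2
        · exact le_min (hY i j') (by linarith)
        · exact le_min (hY i j') (add_nonneg (ht0 k) hε0.le)
        · exact hX0 i j'
    -- column-wise comparison
    set c : Fin m → ℝ := fun j' =>
      (if j' = j then 2*ε*(φ j (t j - ε)) else 0) +
      (if j' = k then -(2*ε*(φ k (t k + ε))) else 0) with hc_def
    have hcol : ∀ j', ∑ i, (Z i j' - Y i j')^2 ≤ ∑ i, (X i j' - Y i j')^2 + c j' := by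
      intro j'
      simp only [hc_def]
      rcases eq_or_ne j' j with rfl | h1
      · rw [if_pos rfl, if_neg hjk]
        have hper : ∀ i, (Z i j' - Y i j')^2 ≤ (X i j' - Y i j')^2
            + 2*ε*(max (Y i j' - (t j' - ε)) 0) := by
          intro i
          have := (sq_diff_bounds (Y i j') (t j' - ε) (t j') (by linarith)).2
          rw [hZe, if_pos rfl, hXeq i j']
          have hmc : ∀ b : ℝ, (min (Y i j') b - Y i j')^2 = (Y i j' ⊓ b - Y i j')^2 := fun b => rfl
          nlinarith [this]
        calc ∑ i, (Z i j' - Y i j')^2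
            ≤ ∑ i, ((X i j' - Y i j')^2 + 2*ε*(max (Y i j' - (t j' - ε)) 0)) :=
              Finset.sum_le_sum fun i _ => hper i
          _ = ∑ i, (X i j' - Y i j')^2 + (2*ε*(φ j' (t j' - ε)) + 0) := by
              rw [Finset.sum_add_distrib, ← Finset.mul_sum, hφe]; ring
      · rcases eq_or_ne j' k with rfl | h2
        · rw [if_neg h1, if_pos rfl]
          have hper : ∀ i, (Z i j' - Y i j')^2 ≤ (X i j' - Y i j')^2
              - 2*ε*(max (Y i j' - (t j' + ε)) 0) := by
            intro i
            have := (sq_diff_bounds (Y i j') (t j') (t j' + ε) (by linarith)).1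
            rw [hZe, if_neg h1, if_pos rfl, hXeq i j']
            nlinarith [this]
          calc ∑ i, (Z i j' - Y i j')^2
              ≤ ∑ i, ((X i j' - Y i j')^2 - 2*ε*(max (Y i j' - (t j' + ε)) 0)) :=
                Finset.sum_le_sum fun i _ => hper i
            _ = ∑ i, (X i j' - Y i j')^2 + (0 + -(2*ε*(φ j' (t j' + ε)))) := by
                rw [Finset.sum_sub_distrib, ← Finset.mul_sum, hφe]; ring
        · rw [if_neg h1, if_neg h2]
          have : ∀ i, Z i j' = X i j' := fun i => by rw [hZe, if_neg h1, if_neg h2]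
          rw [Finset.sum_congr rfl fun i _ => by rw [this i]]
          simp
    have hcsum : ∑ j', c j' = 2*ε*(φ j (t j - ε)) - 2*ε*(φ k (t k + ε)) := by
      simp only [hc_def]
      rw [Finset.sum_add_distrib,
        Finset.sum_ite_eq' Finset.univ j fun _ => 2*ε*(φ j (t j - ε)),
        Finset.sum_ite_eq' Finset.univ k fun _ => -(2*ε*(φ k (t k + ε)))]
      simp only [Finset.mem_univ, if_true]
      ring
    have hcneg : ∑ j', c j' < 0 := by
      rw [hcsum]
      have l1 : φ j (t j - ε) ≤ φ j (t j) + n * ε := by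
        have := hφlip j (t j - ε) (t j) (by linarith)
        have he : (n:ℝ) * (t j - (t j - ε)) = n * ε := by ring
        linarith [he ▸ this]
      have l2 : φ k (t k) - n * ε ≤ φ k (t k + ε) := by
        have := hφlip k (t k) (t k + ε) (by linarith)
        have he : (n:ℝ) * (t k + ε - t k) = n * ε := by ring
        linarith [he ▸ this]
      nlinarith [hε0, hεδ, hδ]
    have hcmp := hXopt Z hZmem
    rw [Finset.sum_comm (γ := Fin n) (s := Finset.univ) (t := Finset.univ),
      Finset.sum_comm (γ := Fin n) (s := Finset.univ) (t := Finset.univ)] at hcmp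
    have htot : ∑ j', ∑ i, (Z i j' - Y i j')^2
        ≤ ∑ j', ∑ i, (X i j' - Y i j')^2 + ∑ j', c j' := by
      rw [← Finset.sum_add_distrib]
      exact Finset.sum_le_sum fun j' _ => hcol j'
    linarith
  -- choose an active column
  obtain ⟨j₀, hj₀⟩ : ∃ j, 0 < t j := by
    by_contra h
    push_neg at h
    have : ∑ j, t j = 0 := Finset.sum_eq_zero fun j _ => le_antisymm (h j) (ht0 j)
    rw [hsumC] at this
    linarith
  refine ⟨φ j₀ (t j₀), hφ0 _ _, ?_, ?_⟩
  case _ =>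
    -- KKT conditions, with helper facts
    have hact : ∀ j, 0 < t j → φ j (t j) = φ j₀ (t j₀) := by
      intro j hj
      rcases eq_or_ne j j₀ with rfl | hne
      · rfl
      · exact le_antisymm (hexch j₀ j hne.symm hj₀) (hexch j j₀ hne hj)
    intro j
    rcases (ht0 j).eq_or_lt with h | h
    · right
      have hXz : ∀ i, X i j = 0 := by
        intro i
        rw [hXeq i j, ← h]
        exact min_eq_right (hY i j)
      refine ⟨?_, ?_, hXz⟩
      · rw [htj j, ← h]
      · have hne : j ≠ j₀ := by
          rintro rfl
          rw [← h] at hj₀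
          exact lt_irrefl 0 hj₀
        have h1 : φ j (t j) ≤ φ j₀ (t j₀) := hexch j₀ j hne.symm hj₀
        have h2 : φ j (t j) = ∑ i, Y i j := by
          rw [hφe, ← h]
          exact Finset.sum_congr rfl fun i _ => by
            rw [sub_zero]
            exact max_eq_left (hY i j)
        linarith
    · left
      exact ⟨(htj j) ▸ h, (hφX j).trans (hact j h)⟩
  case _ =>
    intro j z hz i
    -- helper facts again
    have hact : ∀ j, 0 < t j → φ j (t j) = φ j₀ (t j₀) := by
      intro j hj
      rcases eq_or_ne j j₀ with rfl | hne
      · rfl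
      · exact le_antisymm (hexch j₀ j hne.symm hj₀) (hexch j j₀ hne hj)
    have hφle : φ j (t j) ≤ φ j₀ (t j₀) := by
      rcases (ht0 j).eq_or_lt with h | h
      · have hne : j ≠ j₀ := by
          rintro rfl
          rw [← h] at hj₀
          exact lt_irrefl 0 hj₀
        exact hexch j₀ j hne.symm hj₀
      · exact (hact j h).le
    set v : Fin n → ℝ := fun i => Y i j - X i j with hv_def
    have hve : ∀ i, v i = Y i j - X i j := fun i => rfl
    have hvsum : ∑ i, v i = φ j (t j) := hφX j
    have hvmem : v ∈ solidSimplex n (φ j₀ (t j₀)) := by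
      constructor
      · intro i
        rw [hve]
        linarith [hXY' i j]
      · rw [hvsum]; exact hφle
    have hvar : ∀ w ∈ solidSimplex n (φ j₀ (t j₀)), ∑ i, (Y i j - v i) * (w i - v i) ≤ 0 := by
      intro w hw
      obtain ⟨hw0, hwsum⟩ := hw
      have hyv : ∀ i, Y i j - v i = X i j := fun i => by rw [hve]; ring
      have h1 : ∀ i, X i j * w i ≤ t j * w i := fun i =>
        mul_le_mul_of_nonneg_right (htle i j) (hw0 i)
      have h2 : ∀ i, X i j * v i = t j * v i := by
        intro i
        rcases (hvmem.1 i).eq_or_lt with h | h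
        · rw [← h, mul_zero, mul_zero]
        · have hYt : t j < Y i j := by
            by_contra hc
            push_neg at hc
            have : X i j = Y i j := by rw [hXeq i j]; exact min_eq_left hc
            have : v i = 0 := by rw [hve, this]; ring
            rw [this] at h
            exact lt_irrefl 0 h
          have : X i j = t j := by rw [hXeq i j]; exact min_eq_right hYt.le
          rw [this]
      have hsv : t j * (∑ i, w i) ≤ t j * (∑ i, v i) := by
        rcases (ht0 j).eq_or_lt with h | h
        · rw [← h, zero_mul, zero_mul]
        · apply mul_le_mul_of_nonneg_left _ (ht0 j)
          rw [hvsum, hact j h]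
          exact hwsum
      calc ∑ i, (Y i j - v i) * (w i - v i)
          = ∑ i, (X i j * w i - X i j * v i) := by
            exact Finset.sum_congr rfl fun i _ => by rw [hyv i]; ring
        _ = ∑ i, X i j * w i - ∑ i, X i j * v i := Finset.sum_sub_distrib _ _
        _ ≤ ∑ i, t j * w i - ∑ i, t j * v i := by
            have := Finset.sum_le_sum fun i (_ : i ∈ Finset.univ) => h1 i
            have he := Finset.sum_congr rfl fun i (_ : i ∈ Finset.univ) => h2 i
            linarith
        _ = t j * (∑ i, w i) - t j * (∑ i, v i) := by rw [Finset.mul_sum, Finset.mul_sum]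
        _ ≤ 0 := by linarith
    obtain ⟨hz1, hz2⟩ := hz
    have hA := hz2 v hvmem
    have hB := hvar z hz1
    have hid : ∑ i, (z i - v i)^2
        = ∑ i, (z i - Y i j)^2 - ∑ i, (v i - Y i j)^2 + 2 * ∑ i, (Y i j - v i) * (z i - v i) := by
      rw [Finset.mul_sum, ← Finset.sum_sub_distrib, ← Finset.sum_add_distrib]
      exact Finset.sum_congr rfl fun i _ => by ring
    have hkey : ∑ i, (z i - v i)^2 ≤ 0 := by
      simp only at hA
      linarith
    have hzi : z i = v i := by
      have h1 := (Finset.sum_eq_zero_iff_of_nonneg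
        (fun i (_ : i ∈ Finset.univ) => sq_nonneg (z i - v i))).mp
        (le_antisymm hkey (Finset.sum_nonneg fun i _ => sq_nonneg (z i - v i))) i
        (Finset.mem_univ i)
      have := sq_eq_zero_iff.mp h1
      linarith
    rw [hzi, hve]
    ring
end
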